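/- arXiv:1510.07330 — 5 statements merged into one kernel-verified Lean document; each statement's English description precedes it below -/
import Mathlib

section
/- Let f(x) = a_n x^n + ⋯ + a_0 be a polynomial of degree n with integer coefficients and let q be an odd prime. Suppose a_0 is not divisible by q, the congruence f(x) ≡ 0 (mod q) has exactly ℓ solutions in ℤ/qℤ, and exactly b of these solutions are quadratic residues modulo q. Then R(f(x), x^{(q−1)/2} − 1) ≡ 0 (mod q^b). -/
open Polynomial

/-- The Sylvester matrix of two integer polynomials `f` (of degree `n = f.natDegree`)
and `g` (of degree `m = g.natDegree`): an `(m + n) × (m + n)` matrix whose first `m`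
rows are shifted copies of the coefficients of `f` (in decreasing order of degree)
and whose last `n` rows are shifted copies of the coefficients of `g`. -/
def sylvesterMatrix (f g : Polynomial ℤ) :
    Matrix (Fin (g.natDegree + f.natDegree)) (Fin (g.natDegree + f.natDegree)) ℤ :=
  Matrix.of fun i j =>
    if (i : ℕ) < g.natDegree then
      if (i : ℕ) ≤ (j : ℕ) ∧ (j : ℕ) ≤ (i : ℕ) + f.natDegree then
        f.coeff (f.natDegree - ((j : ℕ) - (i : ℕ)))
      else 0
    else
      if (i : ℕ) - g.natDegree ≤ (j : ℕ) ∧ (j : ℕ) ≤ ((i : ℕ) - g.natDegree) + g.natDegree then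
        g.coeff (g.natDegree - ((j : ℕ) - ((i : ℕ) - g.natDegree)))
      else 0

/-- The resultant `R(f, g)` of two integer polynomials, i.e. the determinant of their
Sylvester matrix. -/
def resultant (f g : Polynomial ℤ) : ℤ :=
  (sylvesterMatrix f g).det

/-!
The rows of the Sylvester matrix of `f` and `g` are the coefficient vectors of the polynomials
`X ^ k * f` and `X ^ k * g`, so every common root `ζ` of `f` and `g` modulo `q` gives the kernel
vector `(ζ ^ (N - 1), …, ζ, 1)` of the Sylvester matrix reduced modulo `q`, and distinct roots
give linearly independent vectors (Vandermonde). If an integer matrix has a `k`-dimensional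
kernel modulo a prime `p`, then `p ^ k` divides its determinant: replacing column `j` by `M c`,
for an integer lift `c` of a kernel vector with `c j ≢ 0`, multiplies the determinant by `c j`,
makes that column divisible by `p`, and leaves a `(k - 1)`-dimensional kernel modulo `p`. For `g = X ^ ((q - 1) / 2) - 1`, Fermat's
little theorem makes every nonzero square a root of `g`, and `q ∤ a₀` rules out the root `0`.
-/

open Module LinearMap Matrix Function

theorem Matrix.det_updateCol_mulVec {n R : Type*} [Fintype n] [DecidableEq n] [CommRing R]
    (M : Matrix n n R) (c : n → R) (j : n) :
    (M.updateCol j (M *ᵥ c)).det = M.det * c j := by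
  rw [← cramer_apply, cramer_eq_adjugate_mulVec, mulVec_mulVec, adjugate_mul, smul_mulVec,
    one_mulVec, Pi.smul_apply, smul_eq_mul]

theorem Matrix.mul_det_updateCol_mulVec_div {n : Type*} [Fintype n] [DecidableEq n]
    (M : Matrix n n ℤ) {c : n → ℤ} {d : ℤ} (hd : ∀ i, d ∣ (M *ᵥ c) i) (j : n) :
    d * (M.updateCol j fun i => (M *ᵥ c) i / d).det = M.det * c j := by
  rw [← det_updateCol_smul, ← M.det_updateCol_mulVec c j]
  congr 2
  exact funext fun i => Int.mul_ediv_cancel' (hd i)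

theorem Matrix.updateCol_mulVec_of_eq_zero {m n R : Type*} [Fintype n] [DecidableEq n]
    [NonUnitalNonAssocSemiring R] (M : Matrix m n R) {j : n} (w : m → R) {x : n → R}
    (hx : x j = 0) : M.updateCol j w *ᵥ x = M *ᵥ x := by
  funext i
  refine Finset.sum_congr rfl fun k _ => ?_
  by_cases hk : k = j
  · subst hk; simp [hx]
  · simp [hk]

theorem Submodule.finrank_le_finrank_inf_ker_add_one {K V : Type*} [Field K] [AddCommGroup V]
    [Module K V] [FiniteDimensional K V] (U : Submodule K V) (φ : V →ₗ[K] K) :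
    finrank K U ≤ finrank K ↥(U ⊓ ker φ) + 1 := by
  have hsup := Submodule.finrank_sup_add_finrank_inf_eq U (ker φ)
  have hle := Submodule.finrank_le (U ⊔ ker φ)
  have hrank := finrank_range_add_finrank_ker φ
  have hrange : finrank K (range φ) ≤ 1 := (Submodule.finrank_le _).trans (finrank_self K).le
  omega

theorem pow_finrank_ker_dvd_det {n : Type*} [Fintype n] [DecidableEq n] (p : ℕ) [Fact p.Prime]
    (M : Matrix n n ℤ) :
    (p : ℤ) ^ finrank (ZMod p) (ker (toLin' (M.map (Int.castRingHom (ZMod p))))) ∣ M.det := by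
  suffices ∀ k (M : Matrix n n ℤ),
      k ≤ finrank (ZMod p) (ker (toLin' (M.map (Int.castRingHom (ZMod p))))) →
      (p : ℤ) ^ k ∣ M.det from this _ M le_rfl
  intro k
  induction k with
  | zero => simp
  | succ k ih =>
    intro M hk
    set U := ker (toLin' (M.map (Int.castRingHom (ZMod p))))
    obtain ⟨v, hvU, hv0⟩ := U.exists_mem_ne_zero_of_ne_bot fun h => by
      rw [h, finrank_bot] at hk; omega
    obtain ⟨j, hj⟩ := ne_iff.mp hv0
    set c : n → ℤ := fun i => (v i).val
    have hc : Int.castRingHom (ZMod p) ∘ c = v := funext fun i => by simp [c]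
    have hMc : ∀ i, (p : ℤ) ∣ (M *ᵥ c) i := fun i => by
      rw [← ZMod.intCast_zmod_eq_zero_iff_dvd, ← eq_intCast (Int.castRingHom _),
        RingHom.map_mulVec, hc]
      exact congrFun hvU i
    set M' := M.updateCol j fun i => (M *ᵥ c) i / p
    have hker : U ⊓ ker (LinearMap.proj j) ≤
        ker (toLin' (M'.map (Int.castRingHom (ZMod p)))) := by
      rintro x ⟨hxU, hxj⟩
      replace hxj : x j = 0 := mem_ker.mp hxj
      rw [mem_ker, toLin'_apply, map_updateCol, updateCol_mulVec_of_eq_zero _ _ hxj]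
      exact hxU
    have hdvd : (p : ℤ) ^ k ∣ M'.det := ih _ <| by
      have := U.finrank_le_finrank_inf_ker_add_one (LinearMap.proj j)
      have := Submodule.finrank_mono hker
      omega
    have hcj : ¬ (p : ℤ) ∣ c j := by
      rw [← ZMod.intCast_zmod_eq_zero_iff_dvd]
      simpa [c] using hj
    have hcop : IsCoprime ((p : ℤ) ^ (k + 1)) (c j) :=
      ((Prime.coprime_iff_not_dvd (Nat.prime_iff_prime_int.mp Fact.out)).mpr hcj).pow_left
    refine hcop.dvd_of_dvd_mul_right ?_
    rw [← M.mul_det_updateCol_mulVec_div hMc j, pow_succ']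
    exact mul_dvd_mul_left _ hdvd

theorem Polynomial.coeff_X_pow_mul_eq_ite {R : Type*} [Semiring R] (p : R[X]) {s j : ℕ} (e : ℕ)
    (hj : j ≤ e + s + p.natDegree) :
    (X ^ e * p).coeff (e + s + p.natDegree - j) =
      if s ≤ j ∧ j ≤ s + p.natDegree then p.coeff (p.natDegree - (j - s)) else 0 := by
  rw [coeff_X_pow_mul']
  split_ifs
  · congr 1; omega
  · exact coeff_eq_zero_of_natDegree_lt (by omega)
  · omega
  · rfl

theorem sylvesterMatrix_apply_eq_coeff (f g : ℤ[X]) (i j : Fin (g.natDegree + f.natDegree)) :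
    sylvesterMatrix f g i j =
      (if (i : ℕ) < g.natDegree then X ^ (g.natDegree - 1 - i) * f
        else X ^ (g.natDegree + f.natDegree - 1 - i) * g).coeff (Fin.rev j) := by
  have := j.isLt
  simp only [sylvesterMatrix, Matrix.of_apply, Fin.val_rev]
  by_cases hi : (i : ℕ) < g.natDegree
  · simp only [hi, ↓reduceIte]
    rw [show g.natDegree + f.natDegree - (j + 1) =
        (g.natDegree - 1 - i) + i + f.natDegree - j by omega, coeff_X_pow_mul_eq_ite _ _ (by omega)]
  · simp only [hi, ↓reduceIte]
    rw [show g.natDegree + f.natDegree - (j + 1) =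
        (g.natDegree + f.natDegree - 1 - i) + (i - g.natDegree) + g.natDegree - j by omega,
      coeff_X_pow_mul_eq_ite _ _ (by omega)]

theorem Polynomial.sum_coeff_rev_mul_pow_rev {R : Type*} [CommSemiring R] {N : ℕ} (P : R[X])
    (hP : P.natDegree < N) (ζ : R) :
    ∑ j : Fin N, P.coeff (Fin.rev j) * ζ ^ (Fin.rev j : ℕ) = P.eval ζ := by
  rw [eval_eq_sum_range' hP, ← Fin.sum_univ_eq_sum_range (fun k => P.coeff k * ζ ^ k)]
  exact Fintype.sum_equiv Fin.revPerm _ _ fun _ => rfl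

theorem sylvesterMatrix_map_mulVec_pow_rev {R : Type*} [CommRing R] (f g : ℤ[X]) {ζ : R}
    (hf : (f.map (Int.castRingHom R)).eval ζ = 0) (hg : (g.map (Int.castRingHom R)).eval ζ = 0) :
    (sylvesterMatrix f g).map (Int.castRingHom R) *ᵥ (fun j => ζ ^ (Fin.rev j : ℕ)) = 0 := by
  funext i
  have := i.isLt
  simp only [mulVec, dotProduct, map_apply, sylvesterMatrix_apply_eq_coeff, ← coeff_map]
  rw [sum_coeff_rev_mul_pow_rev]
  · split_ifs <;> simp [hf, hg]
  · refine natDegree_map_le.trans_lt ?_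
    split_ifs <;>
      exact (natDegree_mul_le.trans (Nat.add_le_add_right (natDegree_X_pow_le _) _)).trans_lt
        (by omega)

theorem linearIndependent_pow_rev {R : Type*} [CommRing R] [IsDomain R] {b N : ℕ}
    {σ : Fin b → R} (hσ : Injective σ) (hbN : b ≤ N) :
    LinearIndependent R fun s (j : Fin N) => σ s ^ (Fin.rev j : ℕ) := by
  rw [Fintype.linearIndependent_iff]
  intro c hc
  refine congrFun (eq_zero_of_forall_pow_sum_mul_pow_eq_zero hσ fun i => ?_)
  simpa only [Fin.rev_rev, Finset.sum_apply, Pi.smul_apply, smul_eq_mul, Fin.val_castLE,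
    Pi.zero_apply] using
    congrFun hc (Fin.rev (Fin.castLE hbN i))

theorem card_le_finrank_ker_sylvesterMatrix_map {K : Type*} [Field K] (f g : ℤ[X])
    (hf : f.map (Int.castRingHom K) ≠ 0) (S : Finset K)
    (hS : ∀ ζ ∈ S, (f.map (Int.castRingHom K)).eval ζ = 0 ∧
      (g.map (Int.castRingHom K)).eval ζ = 0) :
    S.card ≤ finrank K (ker (toLin' ((sylvesterMatrix f g).map (Int.castRingHom K)))) := by
  have hcard : S.card ≤ g.natDegree + f.natDegree :=
    calc S.card ≤ (f.map (Int.castRingHom K)).natDegree :=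
          card_le_degree_of_subset_roots fun ζ hζ => (mem_roots hf).mpr (hS ζ hζ).1
      _ ≤ f.natDegree := natDegree_map_le
      _ ≤ _ := Nat.le_add_left _ _
  have hσ : Injective fun s => (S.equivFin.symm s : K) :=
    Subtype.val_injective.comp S.equivFin.symm.injective
  rw [← Fintype.card_fin S.card, ← finrank_span_eq_card (linearIndependent_pow_rev hσ hcard)]
  refine Submodule.finrank_mono (Submodule.span_le.mpr ?_)
  rintro _ ⟨s, rfl⟩
  have hroot := hS _ (S.equivFin.symm s).2
  exact sylvesterMatrix_map_mulVec_pow_rev f g hroot.1 hroot.2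

theorem ZMod.sq_pow_sub_one_div_two {p : ℕ} [Fact p.Prime] {y : ZMod p} (hy : y ≠ 0) :
    (y ^ 2) ^ ((p - 1) / 2) = 1 := by
  rcases (Fact.out : p.Prime).eq_two_or_odd' with rfl | hp
  · simp
  · rw [← pow_mul, Nat.mul_div_cancel' (Nat.Odd.sub_odd hp odd_one).two_dvd,
      pow_card_sub_one_eq_one hy]

theorem resultant_halfpow_sub_one_dvd_general (q : ℕ) [Fact q.Prime]
    (f : Polynomial ℤ)
    (ha0 : ¬ (q : ℤ) ∣ f.coeff 0)
    (b : ℕ)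
    (hb : (Finset.univ.filter fun x : ZMod q =>
        (f.map (Int.castRingHom (ZMod q))).eval x = 0 ∧ ∃ y : ZMod q, x = y ^ 2).card = b) :
    (q : ℤ) ^ b ∣ _root_.resultant f (X ^ ((q - 1) / 2) - 1) := by
  have hf0 : (f.map (Int.castRingHom (ZMod q))).eval 0 ≠ 0 := by
    rwa [← coeff_zero_eq_eval_zero, coeff_map, eq_intCast, Ne,
      ZMod.intCast_zmod_eq_zero_iff_dvd]
  rw [← hb]
  refine (pow_dvd_pow _ (card_le_finrank_ker_sylvesterMatrix_map _ _ ?_ _ ?_)).trans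
    (pow_finrank_ker_dvd_det q _)
  · exact fun h => hf0 (by rw [h, eval_zero])
  · simp only [Finset.mem_filter, Finset.mem_univ, true_and]
    rintro _ ⟨hfx, y, rfl⟩
    have hy : y ≠ 0 := by rintro rfl; simp_all
    simp [hfx, ZMod.sq_pow_sub_one_div_two hy]

/-- **Theorem 3, first part.** Let `f` be an integer polynomial of degree `n`, `q` an
odd prime with `q ∤ a_0`, and suppose `f(x) ≡ 0 (mod q)` has exactly `ℓ` solutions,
of which exactly `b` are quadratic residues mod `q`. Then
`R(f(x), x^{(q-1)/2} - 1) ≡ 0 (mod q^b)`. -/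
theorem resultant_halfpow_sub_one_dvd (q : ℕ) [Fact q.Prime] (hodd : Odd q)
    (f : Polynomial ℤ) (n : ℕ) (hn : f.natDegree = n)
    (ha0 : ¬ (q : ℤ) ∣ f.coeff 0)
    (ℓ : ℕ)
    (hℓ : (Finset.univ.filter fun x : ZMod q =>
        (f.map (Int.castRingHom (ZMod q))).eval x = 0).card = ℓ)
    (b : ℕ)
    (hb : (Finset.univ.filter fun x : ZMod q =>
        (f.map (Int.castRingHom (ZMod q))).eval x = 0 ∧ ∃ y : ZMod q, x = y ^ 2).card = b) :
    (q : ℤ) ^ b ∣ _root_.resultant f (X ^ ((q - 1) / 2) - 1) :=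
  resultant_halfpow_sub_one_dvd_general q f ha0 b hb
end

section
/- Let f(x) = a_n x^n + ⋯ + a_0 be a polynomial of degree n with integer coefficients and let q be an odd prime. Suppose a_0 is not divisible by q, the congruence f(x) ≡ 0 (mod q) has exactly ℓ solutions in ℤ/qℤ, and exactly b of these solutions are quadratic residues modulo q. Then R(f(x), x^{(q−1)/2} + 1) ≡ 0 (mod q^{ℓ−b}). -/
/-!
A root `x` of `f` mod `q` that is a quadratic nonresidue satisfies `x ^ ((q - 1) / 2) = -1` by
Euler's criterion, so it is a common root of `f` and `g = X ^ ((q - 1) / 2) + 1` mod `q`. Every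
common root `x` gives the kernel vector `(x ^ (N - 1), …, x, 1)` of the Sylvester matrix mod `q`,
and distinct roots give linearly independent ones (Vandermonde). Finally, if the reduction mod `q`
of an integer matrix `M` has `d` independent kernel vectors then `q ^ d ∣ det M`: lifting one
kernel vector `c` to `ℤ`, Cramer's rule `c j * det M = det (M with column j replaced by M c)`
extracts a factor `q` from the column `M c ≡ 0`, and the remaining `d - 1` vectors, after
clearing their `j`-th coordinate, are kernel vectors of the new matrix.
-/

open Polynomial

open Matrix

namespace ZMod

theorem pow_div_two_eq_neg_one_of_not_isSquare {p : ℕ} [Fact p.Prime] {a : ZMod p}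
    (ha : ¬IsSquare a) : a ^ (p / 2) = -1 := by
  have ha0 : a ≠ 0 := by
    rintro rfl
    exact ha IsSquare.zero
  exact (pow_div_two_eq_neg_one_or_one p ha0).resolve_left fun h =>
    ha ((euler_criterion p ha0).mpr h)

end ZMod

namespace Matrix

variable {ι R : Type*} [Fintype ι] [DecidableEq ι] [CommRing R]

theorem det_updateCol_mulVec_s5 (M : Matrix ι ι R) (j : ι) (c : ι → R) :
    (M.updateCol j (M *ᵥ c)).det = c j * M.det := by
  rw [← cramer_apply, cramer_eq_adjugate_mulVec, mulVec_mulVec, adjugate_mul, smul_mulVec,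
    one_mulVec, Pi.smul_apply, smul_eq_mul, mul_comm]

theorem updateCol_mulVec_of_apply_eq_zero (M : Matrix ι ι R) {j : ι} (w : ι → R)
    {v : ι → R} (hv : v j = 0) : M.updateCol j w *ᵥ v = M *ᵥ v := by
  ext k
  refine Finset.sum_congr rfl fun i _ => ?_
  by_cases hi : i = j
  · simp [hi, hv]
  · simp [updateCol_ne hi]

end Matrix

theorem linearIndependent_pow_sub {R : Type*} [CommRing R] [IsDomain R] {d N : ℕ}
    {t : Fin d → R} (ht : Function.Injective t) (hdN : d ≤ N) :
    LinearIndependent R fun i (j : Fin N) => t i ^ (N - 1 - j) := by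
  rw [Fintype.linearIndependent_iff]
  intro c hc
  refine congrFun (eq_zero_of_forall_pow_sum_mul_pow_eq_zero ht fun e => ?_)
  have he := congrFun hc ⟨N - 1 - e, by omega⟩
  simpa [Finset.sum_apply, show N - 1 - (N - 1 - e) = e by omega] using he

section Sylvester

variable {R : Type*} [CommRing R]

theorem sum_shifted_coeff_mul_pow (p : ℤ[X]) (x : R) {N i : ℕ} (hi : i + p.natDegree < N) :
    ∑ j : Fin N, (if i ≤ (j : ℕ) ∧ (j : ℕ) ≤ i + p.natDegree then
        Int.castRingHom R (p.coeff (p.natDegree - (j - i))) else 0) * x ^ (N - 1 - j) =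
      x ^ (N - 1 - i - p.natDegree) * (p.map (Int.castRingHom R)).eval x := by
  set D := p.natDegree
  simp only [ite_mul, zero_mul]
  rw [Fin.sum_univ_eq_sum_range (fun j => if i ≤ j ∧ j ≤ i + D then
      Int.castRingHom R (p.coeff (D - (j - i))) * x ^ (N - 1 - j) else 0) N,
    ← Finset.sum_filter,
    eval_eq_sum_range' (n := D + 1) (natDegree_map_le.trans_lt D.lt_succ_self),
    Finset.mul_sum]
  refine Finset.sum_nbij' (fun j => i + D - j) (fun k => i + D - k) ?_ ?_ ?_ ?_ ?_
  · intro j hj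
    simp only [Finset.mem_filter, Finset.mem_range] at hj ⊢
    omega
  · intro k hk
    simp only [Finset.mem_filter, Finset.mem_range] at hk ⊢
    omega
  · intro j hj
    simp only [Finset.mem_filter, Finset.mem_range] at hj
    omega
  · intro k hk
    simp only [Finset.mem_range] at hk
    omega
  · intro j hj
    simp only [Finset.mem_filter, Finset.mem_range] at hj
    rw [coeff_map, show D - (j - i) = i + D - j by omega,
      show N - 1 - j = (N - 1 - i - D) + (i + D - j) by omega, pow_add]
    ring

theorem sylvesterMatrix_map_mulVec_pow_eq_zero {f g : ℤ[X]} {x : R}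
    (hf : (f.map (Int.castRingHom R)).eval x = 0) (hg : (g.map (Int.castRingHom R)).eval x = 0) :
    (sylvesterMatrix f g).map (Int.castRingHom R) *ᵥ
      (fun j => x ^ (g.natDegree + f.natDegree - 1 - j)) = 0 := by
  ext k
  simp only [mulVec, dotProduct, map_apply, sylvesterMatrix, of_apply, Pi.zero_apply]
  by_cases hk : (k : ℕ) < g.natDegree
  · simp only [hk, if_true, apply_ite (Int.castRingHom R), map_zero]
    rw [sum_shifted_coeff_mul_pow f x (by omega), hf, mul_zero]
  · simp only [hk, if_false, apply_ite (Int.castRingHom R), map_zero]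
    rw [sum_shifted_coeff_mul_pow g x (by omega), hg, mul_zero]

end Sylvester

section DetModPrime

variable {ι : Type*} [Fintype ι] [DecidableEq ι] {q : ℕ} [Fact q.Prime]

theorem Matrix.exists_mul_det_updateCol_eq (M : Matrix ι ι ℤ) {u : ι → ZMod q}
    (hu : M.map (Int.castRingHom (ZMod q)) *ᵥ u = 0) (j : ι) :
    ∃ w : ι → ℤ, (q : ℤ) * (M.updateCol j w).det = (u j).val * M.det := by
  set c : ι → ℤ := fun k => (u k).val
  have hc : Int.castRingHom (ZMod q) ∘ c = u := funext fun k => by simp [c]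
  have hdvd : ∀ k, (q : ℤ) ∣ (M *ᵥ c) k := fun k => by
    rw [← ZMod.intCast_zmod_eq_zero_iff_dvd, ← eq_intCast (Int.castRingHom (ZMod q)),
      RingHom.map_mulVec, hc, hu, Pi.zero_apply]
  choose w hw using hdvd
  have hMc : M *ᵥ c = (q : ℤ) • w := funext fun k => by simp [hw k]
  exact ⟨w, by rw [← det_updateCol_smul, ← hMc, det_updateCol_mulVec_s5]⟩

theorem Matrix.pow_dvd_det_of_linearIndependent {d : ℕ} (M : Matrix ι ι ℤ)
    (v : Fin d → ι → ZMod q) (hv : LinearIndependent (ZMod q) v)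
    (hMv : ∀ i, M.map (Int.castRingHom (ZMod q)) *ᵥ v i = 0) : (q : ℤ) ^ d ∣ M.det := by
  induction d generalizing M with
  | zero => simp
  | succ d ih =>
    set u := v (Fin.last d)
    obtain ⟨j, hj⟩ : ∃ j, u j ≠ 0 := Function.ne_iff.mp (hv.ne_zero _)
    obtain ⟨w, hw⟩ := M.exists_mul_det_updateCol_eq (hMv (Fin.last d)) j
    -- Clearing the `j`-th coordinates of the other vectors against `u` makes the `j`-th column,
    -- the only one changed, irrelevant to them.
    let c : Fin (d + 1) → ZMod q := Fin.lastCases 0 fun i => -(v i.castSucc j / u j)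
    let v' : Fin d → ι → ZMod q := fun i => v i.castSucc + c i.castSucc • u
    have hv' : LinearIndependent (ZMod q) v' :=
      ((linearIndependent_add_smul_iff (by simp [c])).mpr hv).comp _ (Fin.castSucc_injective d)
    have hv'j : ∀ i, v' i j = 0 := fun i => by
      simp [v', c, div_mul_cancel₀ _ hj]
    have hdet : (q : ℤ) ^ d ∣ (M.updateCol j w).det := ih _ v' hv' fun i => by
      rw [map_updateCol, updateCol_mulVec_of_apply_eq_zero _ _ (hv'j i), mulVec_add,
        mulVec_smul, hMv, hMv, smul_zero, add_zero]
    have hqj : ¬(q : ℤ) ∣ (u j).val := by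
      rw [← ZMod.intCast_zmod_eq_zero_iff_dvd]
      simpa using hj
    refine (Nat.prime_iff_prime_int.mp Fact.out).pow_dvd_of_dvd_mul_left _ hqj ?_
    rw [← hw, pow_succ']
    exact mul_dvd_mul_left _ hdet

end DetModPrime

theorem pow_card_dvd_resultant_of_isRoot {q : ℕ} [Fact q.Prime] {f g : ℤ[X]}
    (hg : g.map (Int.castRingHom (ZMod q)) ≠ 0) {s : Finset (ZMod q)}
    (hs : ∀ x ∈ s, (f.map (Int.castRingHom (ZMod q))).IsRoot x ∧
      (g.map (Int.castRingHom (ZMod q))).IsRoot x) :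
    (q : ℤ) ^ s.card ∣ _root_.resultant f g := by
  have hcard : s.card ≤ g.natDegree + f.natDegree :=
    (card_le_degree_of_subset_roots fun x hx => (mem_roots hg).mpr (hs x hx).2).trans
      (natDegree_map_le.trans (Nat.le_add_right _ _))
  let t : Fin s.card → ZMod q := fun i => s.equivFin.symm i
  have ht : Function.Injective t := Subtype.val_injective.comp s.equivFin.symm.injective
  exact (sylvesterMatrix f g).pow_dvd_det_of_linearIndependent _
    (linearIndependent_pow_sub ht hcard) fun i =>
      (hs _ (s.equivFin.symm i).2).elim sylvesterMatrix_map_mulVec_pow_eq_zero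

theorem resultant_halfpow_add_one_dvd_general (q : ℕ) [Fact q.Prime] (hodd : Odd q)
    (f : Polynomial ℤ)
    (ℓ : ℕ)
    (hℓ : (Finset.univ.filter fun x : ZMod q =>
        (f.map (Int.castRingHom (ZMod q))).eval x = 0).card = ℓ)
    (b : ℕ)
    (hb : (Finset.univ.filter fun x : ZMod q =>
        (f.map (Int.castRingHom (ZMod q))).eval x = 0 ∧ ∃ y : ZMod q, x = y ^ 2).card = b) :
    (q : ℤ) ^ (ℓ - b) ∣ _root_.resultant f (X ^ ((q - 1) / 2) + 1) := by
  have hsplit := Finset.card_filter_add_card_filter_not (s := Finset.univ.filter fun x : ZMod q =>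
    (f.map (Int.castRingHom (ZMod q))).eval x = 0) (fun x => ∃ y : ZMod q, x = y ^ 2)
  rw [Finset.filter_filter, Finset.filter_filter, hb, hℓ] at hsplit
  have hq2 := (Fact.out : q.Prime).two_le
  obtain ⟨k, rfl⟩ := hodd
  rw [← hsplit, Nat.add_sub_cancel_left]
  refine pow_card_dvd_resultant_of_isRoot ?_ fun x hx => ?_
  · have hm : (2 * k + 1 - 1) / 2 ≠ 0 := by omega
    simpa using (monic_X_pow_add_C (1 : ZMod (2 * k + 1)) hm).ne_zero
  · obtain ⟨hfx, hx⟩ := (Finset.mem_filter.mp hx).2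
    have hsq : ¬IsSquare x := fun ⟨y, hy⟩ => hx ⟨y, by rw [hy, sq]⟩
    refine ⟨hfx, ?_⟩
    rw [IsRoot, Polynomial.map_add, Polynomial.map_pow, map_X, Polynomial.map_one, eval_add,
      eval_pow, eval_X, eval_one, show (2 * k + 1 - 1) / 2 = (2 * k + 1) / 2 by omega,
      ZMod.pow_div_two_eq_neg_one_of_not_isSquare hsq, neg_add_cancel]

/-- **Theorem 3, first part.** Let `f` be an integer polynomial of degree `n`, `q` an
odd prime with `q ∤ a_0`, and suppose `f(x) ≡ 0 (mod q)` has exactly `ℓ` solutions,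
of which exactly `b` are quadratic residues mod `q`. Then
`R(f(x), x^{(q-1)/2} + 1) ≡ 0 (mod q^{ℓ-b})`. -/
theorem resultant_halfpow_add_one_dvd (q : ℕ) [Fact q.Prime] (hodd : Odd q)
    (f : Polynomial ℤ) (n : ℕ) (hn : f.natDegree = n)
    (ha0 : ¬ (q : ℤ) ∣ f.coeff 0)
    (ℓ : ℕ)
    (hℓ : (Finset.univ.filter fun x : ZMod q =>
        (f.map (Int.castRingHom (ZMod q))).eval x = 0).card = ℓ)
    (b : ℕ)
    (hb : (Finset.univ.filter fun x : ZMod q =>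
        (f.map (Int.castRingHom (ZMod q))).eval x = 0 ∧ ∃ y : ZMod q, x = y ^ 2).card = b) :
    (q : ℤ) ^ (ℓ - b) ∣ _root_.resultant f (X ^ ((q - 1) / 2) + 1) :=
  resultant_halfpow_add_one_dvd_general q hodd f ℓ hℓ b hb
end

section
/- Let q be an odd prime and let P, Q be integers. Then the resultant of x² − Px + Q and x^{q−1} − 1 equals 1 + Q^{q−1} − V_{q−1}(P, Q), where V_n(P, Q) is the n-th term of the Lucas sequence of the second kind with parameters P, Q. -/
open Polynomial

/-- The Lucas sequence of the second kind `V_n(P, Q)`: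
`V_0 = 2`, `V_1 = P`, `V_i = P * V_{i-1} - Q * V_{i-2}`. -/
def lucasV (P Q : ℤ) : ℕ → ℤ
  | 0 => 2
  | 1 => P
  | n + 2 => P * lucasV P Q (n + 1) - Q * lucasV P Q n

/-! Over `ℂ`, `X ^ 2 - P X + Q = (X - α) (X - β)` with `α + β = P` and `α β = Q`. By
multiplicativity, its resultant with `X ^ n - 1` is
`(α ^ n - 1) (β ^ n - 1) = (α β) ^ n - (α ^ n + β ^ n) + 1`, and `α ^ n + β ^ n = V_n(P, Q)`.
The determinant `resultant` agrees with Mathlib's `Polynomial.resultant` because `sylvesterMatrix`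
is the transpose of `Polynomial.sylvester` with rows and columns in reverse order. -/

theorem sylvesterMatrix_eq_reindex_transpose_sylvester (f g : ℤ[X]) :
    sylvesterMatrix f g = ((f.sylvester g f.natDegree g.natDegree).transpose).reindex
      (Fin.revPerm.trans (finCongr (add_comm _ _))) (Fin.revPerm.trans (finCongr (add_comm _ _))) := by
  ext i j
  obtain ⟨a, rfl⟩ := (Fin.revPerm.trans (finCongr (add_comm f.natDegree g.natDegree))).surjective i
  obtain ⟨b, rfl⟩ := (Fin.revPerm.trans (finCongr (add_comm f.natDegree g.natDegree))).surjective j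
  simp only [Matrix.reindex_apply, Matrix.submatrix_apply, Equiv.symm_apply_apply,
    Matrix.transpose_apply]
  induction a using Fin.addCases <;> induction b using Fin.addCases <;>
    simp only [sylvesterMatrix, sylvester, Matrix.of_apply, Equiv.trans_apply, Fin.revPerm_apply,
      finCongr_apply, Fin.val_cast, Fin.val_rev, Fin.val_castAdd, Fin.val_natAdd,
      Fin.addCases_left, Fin.addCases_right, Set.mem_Icc] <;>
    split_ifs <;> first | rfl | omega | (congr 1; omega)

theorem resultant_eq_polynomial_resultant (f g : ℤ[X]) : _root_.resultant f g = f.resultant g := by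
  rw [_root_.resultant, sylvesterMatrix_eq_reindex_transpose_sylvester, Matrix.det_reindex_self,
    Matrix.det_transpose, Polynomial.resultant]

theorem IsAlgClosed.exists_add_eq_mul_eq {K : Type*} [Field K] [IsAlgClosed K] (s p : K) :
    ∃ α β : K, α + β = s ∧ α * β = p := by
  have hdeg : (X ^ 2 - C s * X + C p).degree = 2 := by compute_degree!
  obtain ⟨α, hα⟩ := IsAlgClosed.exists_root _ (hdeg ▸ two_ne_zero)
  refine ⟨α, s - α, by ring, ?_⟩
  simp only [IsRoot, eval_add, eval_sub, eval_mul, eval_pow, eval_X, eval_C] at hα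
  linear_combination -hα

theorem Polynomial.resultant_X_sub_C_mul_X_sub_C_left {R : Type*} [CommRing R] (α β : R)
    (g : R[X]) {n : ℕ} (hg : g.natDegree ≤ n) :
    ((X - C α) * (X - C β)).resultant g 2 n = g.eval α * g.eval β := by
  nontriviality R
  have := resultant_mul_left (X - C α) (X - C β) g n hg
  rwa [natDegree_X_sub_C, natDegree_X_sub_C, resultant_X_sub_C_left _ _ _ hg,
    resultant_X_sub_C_left _ _ _ hg] at this

theorem lucasV_eq_pow_add_pow {R : Type*} [CommRing R] {P Q : ℤ} {α β : R}
    (hP : α + β = P) (hQ : α * β = Q) : ∀ n, (lucasV P Q n : R) = α ^ n + β ^ n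
  | 0 => by norm_num [lucasV]
  | 1 => by simp [lucasV, hP]
  | n + 2 => by
    rw [lucasV, Int.cast_sub, Int.cast_mul, Int.cast_mul, lucasV_eq_pow_add_pow hP hQ (n + 1),
      lucasV_eq_pow_add_pow hP hQ n, ← hP, ← hQ]
    ring

theorem resultant_X_sq_sub_C_mul_X_add_C_X_pow_sub_one (P Q : ℤ) (n : ℕ) :
    (X ^ 2 - C P * X + C Q).resultant (X ^ n - 1) = 1 + Q ^ n - lucasV P Q n := by
  obtain ⟨α, β, hP, hQ⟩ := IsAlgClosed.exists_add_eq_mul_eq (P : ℂ) Q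
  have hf : (X ^ 2 - C P * X + C Q).map (Int.castRingHom ℂ) = (X - C α) * (X - C β) := by
    simp only [Polynomial.map_add, Polynomial.map_sub, Polynomial.map_mul, Polynomial.map_pow,
      map_X, map_C, Int.coe_castRingHom, ← hP, ← hQ, C_add, C_mul]
    ring
  have hdeg : (X ^ 2 - C P * X + C Q).natDegree = 2 := by compute_degree!
  apply Int.cast_injective (α := ℂ)
  rw [← eq_intCast (Int.castRingHom ℂ), ← resultant_map_map, hf, hdeg,
    resultant_X_sub_C_mul_X_sub_C_left _ _ _ (natDegree_map_le ..)]
  simp only [Polynomial.map_sub, Polynomial.map_pow, map_X, Polynomial.map_one, eval_sub, eval_pow,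
    eval_X, eval_one, Int.cast_sub, Int.cast_add, Int.cast_one, Int.cast_pow,
    lucasV_eq_pow_add_pow hP hQ, ← hQ]
  ring

theorem resultant_eq_lucasV_general (q : ℕ) (P Q : ℤ) :
    _root_.resultant (X ^ 2 - C P * X + C Q) (X ^ (q - 1) - 1) =
      1 + Q ^ (q - 1) - lucasV P Q (q - 1) := by
  rw [resultant_eq_polynomial_resultant, resultant_X_sq_sub_C_mul_X_add_C_X_pow_sub_one]

/-- The resultant of `x² - Px + Q` and `x^{q-1} - 1` equals
`1 + Q^{q-1} - V_{q-1}(P, Q)`. -/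
theorem resultant_eq_lucasV (q : ℕ) (hq : q.Prime) (hodd : Odd q) (P Q : ℤ) :
    _root_.resultant (X ^ 2 - C P * X + C Q) (X ^ (q - 1) - 1) =
      1 + Q ^ (q - 1) - lucasV P Q (q - 1) :=
  resultant_eq_lucasV_general q P Q
end

section
/- Let q be an odd prime with q ≡ 1 (mod 5) or q ≡ −1 (mod 5), and let k be an integer such that k² + k − 1 is not divisible by q. Then V_{q−1}(1 + 2k, k² + k − 1) ≡ (k² + k − 1)^{q−1} + 1 (mod q²). -/
def lucasU (P Q : ℤ) : ℕ → ℤ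
  | 0 => 0
  | 1 => 1
  | n + 2 => P * lucasU P Q (n + 1) - Q * lucasU P Q n

section Lucas

variable {P Q : ℤ}

-- The polarised third identity is what lets the induction go through.
private lemma lucas_quadratic_identities (P Q : ℤ) (n : ℕ) :
    lucasV P Q n ^ 2 - (P ^ 2 - 4 * Q) * lucasU P Q n ^ 2 = 4 * Q ^ n ∧
    lucasV P Q (n + 1) ^ 2 - (P ^ 2 - 4 * Q) * lucasU P Q (n + 1) ^ 2 = 4 * Q ^ (n + 1) ∧
    lucasV P Q (n + 1) * lucasV P Q n
      - (P ^ 2 - 4 * Q) * (lucasU P Q (n + 1) * lucasU P Q n) = 2 * P * Q ^ n := by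
  induction n with
  | zero => norm_num [lucasV, lucasU, mul_comm]
  | succ n ih =>
    obtain ⟨h₀, h₁, h₂⟩ := ih
    refine ⟨h₁, ?_, ?_⟩
    · rw [lucasV, lucasU]
      linear_combination P ^ 2 * h₁ + Q ^ 2 * h₀ - 2 * P * Q * h₂
    · rw [lucasV, lucasU]
      linear_combination P * h₁ - Q * h₂

theorem lucasV_sq_sub_mul_lucasU_sq (P Q : ℤ) (n : ℕ) :
    lucasV P Q n ^ 2 - (P ^ 2 - 4 * Q) * lucasU P Q n ^ 2 = 4 * Q ^ n :=
  (lucas_quadratic_identities P Q n).1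

theorem sq_dvd_four_mul_of_dvd_lucasV_sub_two {m : ℤ} {n : ℕ} (hV : m ∣ lucasV P Q n - 2)
    (hU : m ∣ lucasU P Q n) : m ^ 2 ∣ 4 * (Q ^ n + 1 - lucasV P Q n) := by
  have h := lucasV_sq_sub_mul_lucasU_sq P Q n
  have hsq : 4 * (Q ^ n + 1 - lucasV P Q n)
      = (lucasV P Q n - 2) ^ 2 - (P ^ 2 - 4 * Q) * lucasU P Q n ^ 2 := by
    linear_combination -h
  rw [hsq]
  exact dvd_sub (pow_dvd_pow_of_dvd hV 2) ((pow_dvd_pow_of_dvd hU 2).mul_left _)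

variable {R : Type*} [CommRing R] {a b : R}

theorem intCast_lucasV (hP : (P : R) = a + b) (hQ : (Q : R) = a * b) (n : ℕ) :
    (lucasV P Q n : R) = a ^ n + b ^ n := by
  induction n using Nat.twoStepInduction with
  | zero => simp [lucasV, one_add_one_eq_two]
  | one => simp [lucasV, hP]
  | more n ih₀ ih₁ =>
    rw [lucasV]
    push_cast
    rw [ih₀, ih₁, hP, hQ]
    ring

theorem sub_mul_intCast_lucasU (hP : (P : R) = a + b) (hQ : (Q : R) = a * b) (n : ℕ) :
    (a - b) * (lucasU P Q n : R) = a ^ n - b ^ n := by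
  induction n using Nat.twoStepInduction with
  | zero => simp [lucasU]
  | one => simp [lucasU]
  | more n ih₀ ih₁ =>
    rw [lucasU]
    push_cast
    linear_combination (P : R) * ih₁ - (Q : R) * ih₀ + (a ^ (n + 1) - b ^ (n + 1)) * hP
      - (a ^ n - b ^ n) * hQ

end Lucas

theorem exists_add_eq_mul_eq_sub_eq_of_sq {F : Type*} [Field F] (h2 : (2 : F) ≠ 0) {P Q s : F}
    (hs : P ^ 2 - 4 * Q = s * s) : ∃ a b : F, a + b = P ∧ a * b = Q ∧ a - b = s :=
  ⟨(P + s) / 2, (P - s) / 2, by field_simp; ring, by field_simp; linear_combination hs,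
    by field_simp; ring⟩

section Fermat

variable {P Q : ℤ} {p : ℕ} [Fact p.Prime] {a b : ZMod p}

theorem dvd_lucasV_sub_one_sub_two (hP : (P : ZMod p) = a + b) (hQ : (Q : ZMod p) = a * b)
    (ha : a ≠ 0) (hb : b ≠ 0) : (p : ℤ) ∣ lucasV P Q (p - 1) - 2 := by
  rw [← ZMod.intCast_zmod_eq_zero_iff_dvd, Int.cast_sub, intCast_lucasV hP hQ,
    ZMod.pow_card_sub_one_eq_one ha, ZMod.pow_card_sub_one_eq_one hb]
  norm_num [one_add_one_eq_two]

theorem dvd_lucasU_sub_one (hP : (P : ZMod p) = a + b) (hQ : (Q : ZMod p) = a * b)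
    (ha : a ≠ 0) (hb : b ≠ 0) (hab : a ≠ b) : (p : ℤ) ∣ lucasU P Q (p - 1) := by
  have h := sub_mul_intCast_lucasU hP hQ (p - 1)
  rw [ZMod.pow_card_sub_one_eq_one ha, ZMod.pow_card_sub_one_eq_one hb, sub_self] at h
  rw [← ZMod.intCast_zmod_eq_zero_iff_dvd]
  exact (mul_eq_zero.mp h).resolve_left (sub_ne_zero.mpr hab)

theorem lucasV_sub_one_modEq (hp2 : p ≠ 2) (hD : IsSquare ((P ^ 2 - 4 * Q : ℤ) : ZMod p))
    (hD0 : ((P ^ 2 - 4 * Q : ℤ) : ZMod p) ≠ 0) (hQ : (Q : ZMod p) ≠ 0) :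
    lucasV P Q (p - 1) ≡ Q ^ (p - 1) + 1 [ZMOD p ^ 2] := by
  obtain ⟨s, hs⟩ := hD
  have h2 : (2 : ZMod p) ≠ 0 := Ring.two_ne_zero (by rwa [ZMod.ringChar_zmod_n])
  push_cast at hs hD0
  obtain ⟨a, b, hadd, hmul, hsub⟩ := exists_add_eq_mul_eq_sub_eq_of_sq h2 hs
  have ha : a ≠ 0 := left_ne_zero_of_mul (hmul ▸ hQ)
  have hb : b ≠ 0 := right_ne_zero_of_mul (hmul ▸ hQ)
  have hab : a ≠ b := sub_ne_zero.mp (hsub ▸ fun h => hD0 (by rw [hs, h, mul_zero]))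
  have hsq := sq_dvd_four_mul_of_dvd_lucasV_sub_two (dvd_lucasV_sub_one_sub_two hadd.symm
    hmul.symm ha hb) (dvd_lucasU_sub_one hadd.symm hmul.symm ha hb hab)
  have hcop : IsCoprime ((p : ℤ) ^ 2) 4 := by
    rw [show (4 : ℤ) = 2 ^ 2 by norm_num]
    exact (Nat.isCoprime_iff_coprime.mpr ((Nat.coprime_primes Fact.out Nat.prime_two).mpr hp2)).pow
  exact Int.modEq_iff_dvd.mpr (hcop.dvd_of_dvd_mul_left hsq)

end Fermat

theorem isSquare_five_of_modEq_one_or_neg_one {q : ℕ} [Fact q.Prime] (hq2 : q ≠ 2)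
    (h5 : (q : ℤ) ≡ 1 [ZMOD 5] ∨ (q : ℤ) ≡ -1 [ZMOD 5]) : IsSquare (5 : ZMod q) := by
  have : Fact (Nat.Prime 5) := ⟨by norm_num⟩
  refine (ZMod.exists_sq_eq_prime_iff_of_mod_four_eq_one (p := 5) (by norm_num) hq2).mp ?_
  rw [← Int.cast_natCast]
  rcases h5 with h | h <;> rw [(ZMod.intCast_eq_intCast_iff _ _ 5).mpr h]
  exacts [⟨1, by simp⟩, ⟨2, by push_cast; rfl⟩]

theorem lucasV_fib_qsub1_congr_general (q : ℕ) (hq : q.Prime)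
    (h5 : (q : ℤ) ≡ 1 [ZMOD 5] ∨ (q : ℤ) ≡ -1 [ZMOD 5]) (k : ℤ)
    (hk : ¬ (q : ℤ) ∣ (k ^ 2 + k - 1)) :
    lucasV (1 + 2 * k) (k ^ 2 + k - 1) (q - 1) ≡
      (k ^ 2 + k - 1) ^ (q - 1) + 1 [ZMOD (q : ℤ) ^ 2] := by
  have : Fact q.Prime := ⟨hq⟩
  obtain ⟨hq2, hq5⟩ : q ≠ 2 ∧ q ≠ 5 := by
    constructor <;> rintro rfl <;> rcases h5 with h | h <;> revert h <;> decide
  have hD : (1 + 2 * k) ^ 2 - 4 * (k ^ 2 + k - 1) = 5 := by ring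
  have h50 : ((5 : ℤ) : ZMod q) ≠ 0 := by
    rw [Ne, ZMod.intCast_zmod_eq_zero_iff_dvd]
    exact fun h => hq5 ((Nat.prime_dvd_prime_iff_eq hq (by norm_num)).mp (by exact_mod_cast h))
  have hk' : ((k ^ 2 + k - 1 : ℤ) : ZMod q) ≠ 0 :=
    (ZMod.intCast_zmod_eq_zero_iff_dvd _ q).not.mpr hk
  refine lucasV_sub_one_modEq hq2 ?_ (hD ▸ h50) hk'
  rw [hD, Int.cast_ofNat]
  exact isSquare_five_of_modEq_one_or_neg_one hq2 h5

/-- **(17).** If `q` is an odd prime with `q ≡ ±1 (mod 5)` and `q ∤ k² + k - 1`, then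
`V_{q-1}(1 + 2k, k² + k - 1) ≡ (k² + k - 1)^{q-1} + 1 (mod q²)`. -/
theorem lucasV_fib_qsub1_congr (q : ℕ) (hq : q.Prime) (hodd : Odd q)
    (h5 : (q : ℤ) ≡ 1 [ZMOD 5] ∨ (q : ℤ) ≡ -1 [ZMOD 5]) (k : ℤ)
    (hk : ¬ (q : ℤ) ∣ (k ^ 2 + k - 1)) :
    lucasV (1 + 2 * k) (k ^ 2 + k - 1) (q - 1) ≡
      (k ^ 2 + k - 1) ^ (q - 1) + 1 [ZMOD (q : ℤ) ^ 2] :=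
  lucasV_fib_qsub1_congr_general q hq h5 k hk
end

section
/- Let q be an odd prime with q ≡ 1 (mod 8) or q ≡ −1 (mod 8), and let k be an integer such that k² + 2k − 1 is not divisible by q. Then V_{q−1}(2 + 2k, k² + 2k − 1) ≡ (k² + 2k − 1)^{q−1} + 1 (mod q²). -/
theorem lucasV_modEq_pow_add_pow {P Q a b m : ℤ} (hP : P ≡ a + b [ZMOD m])
    (hQ : Q ≡ a * b [ZMOD m]) : ∀ n, lucasV P Q n ≡ a ^ n + b ^ n [ZMOD m]
  | 0 => by simp only [lucasV, pow_zero]; rfl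
  | 1 => by simpa only [lucasV, pow_one] using hP
  | n + 2 => by
    have h := (hP.mul (lucasV_modEq_pow_add_pow hP hQ (n + 1))).sub
      (hQ.mul (lucasV_modEq_pow_add_pow hP hQ n))
    rw [lucasV]
    convert h using 1
    ring

/-- Hensel's lemma for `X² - c`. -/
theorem exists_sq_sub_dvd_sq_of_dvd_sq_sub {R : Type*} [CommRing R] {q s c : R}
    (hs : q ∣ s ^ 2 - c) (hcop : IsCoprime (2 * s) q) : ∃ r, q ^ 2 ∣ r ^ 2 - c := by
  obtain ⟨m, hm⟩ := hs
  obtain ⟨u, v, huv⟩ := hcop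
  refine ⟨s - q * m * u, m * v + m ^ 2 * u ^ 2, ?_⟩
  linear_combination hm - q * m * huv

theorem pow_card_sub_one_add_pow_card_sub_one_modEq {q : ℕ} (hq : q.Prime) {a b : ℤ}
    (ha : ¬ (q : ℤ) ∣ a) (hb : ¬ (q : ℤ) ∣ b) :
    a ^ (q - 1) + b ^ (q - 1) ≡ (a * b) ^ (q - 1) + 1 [ZMOD (q : ℤ) ^ 2] := by
  have hq' := Nat.prime_iff_prime_int.mp hq
  have hfa := Int.ModEq.pow_card_sub_one_eq_one hq ((hq'.coprime_iff_not_dvd.mpr ha).symm)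
  have hfb := Int.ModEq.pow_card_sub_one_eq_one hq ((hq'.coprime_iff_not_dvd.mpr hb).symm)
  have hprod := pow_two (q : ℤ) ▸ mul_dvd_mul hfa.symm.dvd hfb.symm.dvd
  refine Int.modEq_iff_dvd.mpr ?_
  rwa [show (a * b) ^ (q - 1) + 1 - (a ^ (q - 1) + b ^ (q - 1))
    = (a ^ (q - 1) - 1) * (b ^ (q - 1) - 1) by ring]

theorem exists_sq_sub_two_dvd_sq {q : ℕ} (hq : q.Prime) (h8 : q % 8 = 1 ∨ q % 8 = 7) :
    ∃ r : ℤ, (q : ℤ) ^ 2 ∣ r ^ 2 - 2 := by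
  have := Fact.mk hq
  have hq2 : q ≠ 2 := by omega
  obtain ⟨t, ht⟩ := (ZMod.exists_sq_eq_two_iff hq2).mpr h8
  obtain ⟨s, rfl⟩ := ZMod.intCast_surjective t
  have hs : (q : ℤ) ∣ s ^ 2 - 2 := by
    rw [← ZMod.intCast_zmod_eq_zero_iff_dvd]
    push_cast
    rw [ht]
    ring
  refine exists_sq_sub_dvd_sq_of_dvd_sq_sub hs ?_
  have hq' := Nat.prime_iff_prime_int.mp hq
  refine (hq'.coprime_iff_not_dvd.mpr fun h2s => ?_).symm
  have h4 : (q : ℤ) ∣ 2 ^ 2 := by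
    have := dvd_sub (dvd_mul_of_dvd_left h2s s) (dvd_mul_of_dvd_right hs 2)
    rwa [show 2 * s * s - 2 * (s ^ 2 - 2) = 2 ^ 2 by ring] at this
  have hq_dvd_two := Int.natCast_dvd_natCast.mp (hq'.dvd_of_dvd_pow h4)
  exact hq2 ((Nat.prime_dvd_prime_iff_eq hq Nat.prime_two).mp hq_dvd_two)

theorem lucasV_pell_qsub1_congr_general (q : ℕ) (hq : q.Prime)
    (h8 : (q : ℤ) ≡ 1 [ZMOD 8] ∨ (q : ℤ) ≡ -1 [ZMOD 8]) (k : ℤ)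
    (hk : ¬ (q : ℤ) ∣ (k ^ 2 + 2 * k - 1)) :
    lucasV (2 + 2 * k) (k ^ 2 + 2 * k - 1) (q - 1) ≡
      (k ^ 2 + 2 * k - 1) ^ (q - 1) + 1 [ZMOD (q : ℤ) ^ 2] := by
  have hmod : q % 8 = 1 ∨ q % 8 = 7 := by
    unfold Int.ModEq at h8
    omega
  obtain ⟨r, hr⟩ := exists_sq_sub_two_dvd_sq hq hmod
  have hQ : (1 + k + r) * (1 + k - r) ≡ k ^ 2 + 2 * k - 1 [ZMOD (q : ℤ) ^ 2] :=
    Int.modEq_iff_dvd.mpr <| by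
      rwa [show k ^ 2 + 2 * k - 1 - (1 + k + r) * (1 + k - r) = r ^ 2 - 2 by ring]
  have hab : ¬ (q : ℤ) ∣ (1 + k + r) * (1 + k - r) := fun h =>
    hk ((hQ.of_dvd (dvd_pow_self _ two_ne_zero)).dvd_iff.mp h)
  calc lucasV (2 + 2 * k) (k ^ 2 + 2 * k - 1) (q - 1)
      ≡ (1 + k + r) ^ (q - 1) + (1 + k - r) ^ (q - 1) [ZMOD (q : ℤ) ^ 2] :=
        lucasV_modEq_pow_add_pow (by rw [show 1 + k + r + (1 + k - r) = 2 + 2 * k by ring])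
          hQ.symm _
    _ ≡ ((1 + k + r) * (1 + k - r)) ^ (q - 1) + 1 [ZMOD (q : ℤ) ^ 2] :=
        pow_card_sub_one_add_pow_card_sub_one_modEq hq (fun h => hab (dvd_mul_of_dvd_left h _))
          (fun h => hab (dvd_mul_of_dvd_right h _))
    _ ≡ (k ^ 2 + 2 * k - 1) ^ (q - 1) + 1 [ZMOD (q : ℤ) ^ 2] := (hQ.pow _).add_right _

/-- **(21).** If `q` is an odd prime with `q ≡ ±1 (mod 8)` and `q ∤ k² + 2k - 1`, then
`V_{q-1}(2 + 2k, k² + 2k - 1) ≡ (k² + 2k - 1)^{q-1} + 1 (mod q²)`. -/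
theorem lucasV_pell_qsub1_congr (q : ℕ) (hq : q.Prime) (hodd : Odd q)
    (h8 : (q : ℤ) ≡ 1 [ZMOD 8] ∨ (q : ℤ) ≡ -1 [ZMOD 8]) (k : ℤ)
    (hk : ¬ (q : ℤ) ∣ (k ^ 2 + 2 * k - 1)) :
    lucasV (2 + 2 * k) (k ^ 2 + 2 * k - 1) (q - 1) ≡
      (k ^ 2 + 2 * k - 1) ^ (q - 1) + 1 [ZMOD (q : ℤ) ^ 2] :=
  lucasV_pell_qsub1_congr_general q hq h8 k hk
end
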